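/- arXiv:1705.07834 — 4 statements merged into one kernel-verified Lean document; each statement's English description precedes it below -/
import Mathlib

section
/- Let f : 2^V → ℝ≥0 be a monotone submodular set function on a finite ground set V with f(∅) = 0. Let the greedy sequence be defined by g_0 = ∅ and g_{i+1} = g_i ∪ {v_i} where v_i maximizes f(g_i ∪ {v}) − f(g_i) over v ∈ V. Then for any set S ⊆ V with |S| ≤ k, f(g_k) ≥ (1 − 1/e) f(S). -/
lemma nwf_sum_bound {V : Type*} [DecidableEq V] (f : Finset V → ℝ)
    (hsubmod : ∀ (A B : Finset V) (v : V), A ⊆ B → v ∉ B →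
      f (insert v B) - f B ≤ f (insert v A) - f A) :
    ∀ (S A : Finset V), f (A ∪ S) ≤ f A + ∑ v ∈ S, (f (insert v A) - f A) := by
  intro S
  induction S using Finset.cons_induction with
  | empty => intro A; simp
  | cons v S hv ih =>
    intro A
    rw [Finset.cons_eq_insert, Finset.sum_insert hv, Finset.union_insert]
    have ihA := ih A
    by_cases hvA : v ∈ A ∪ S
    · rw [Finset.insert_eq_self.mpr hvA]
      have hvA' : v ∈ A := by
        rcases Finset.mem_union.mp hvA with h | h
        · exact h
        · exact absurd h hv
      rw [Finset.insert_eq_self.mpr hvA']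
      linarith
    · have h1 : f (insert v (A ∪ S)) - f (A ∪ S) ≤ f (insert v A) - f A :=
        hsubmod A (A ∪ S) v Finset.subset_union_left hvA
      linarith

/-- Nemhauser–Wolsey–Fisher: greedy maximization of a monotone submodular
normalized nonnegative set function achieves a `(1 - 1/e)` approximation. -/
theorem stmt_2 {V : Type*} [Fintype V] [DecidableEq V] [Nonempty V]
    (f : Finset V → ℝ)
    (hmono : ∀ A B : Finset V, A ⊆ B → f A ≤ f B)
    (hempty : f ∅ = 0)
    (hnonneg : ∀ A : Finset V, 0 ≤ f A)
    (hsubmod : ∀ (A B : Finset V) (v : V), A ⊆ B → v ∉ B →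
      f (insert v B) - f B ≤ f (insert v A) - f A)
    (g : ℕ → Finset V)
    (hg0 : g 0 = ∅)
    (hgreedy : ∀ i : ℕ, ∃ v : V, g (i + 1) = insert v (g i) ∧
      ∀ u : V, f (insert u (g i)) - f (g i) ≤ f (insert v (g i)) - f (g i))
    (k : ℕ) (S : Finset V) (hS : S.card ≤ k) :
    (1 - 1 / Real.exp 1) * f S ≤ f (g k) := by
  have hfS : 0 ≤ f S := hnonneg S
  have he : (0:ℝ) < Real.exp 1 := Real.exp_pos 1
  rcases Nat.eq_zero_or_pos k with hk0 | hkpos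
  · subst hk0
    have hScard : S = ∅ := Finset.card_eq_zero.mp (Nat.le_zero.mp hS)
    subst hScard
    rw [hempty, mul_zero]
    exact hnonneg _
  have hk : (0:ℝ) < (k:ℝ) := by exact_mod_cast hkpos
  have hr0 : (0:ℝ) ≤ 1 - 1/(k:ℝ) := by
    have h1k : (1:ℝ) ≤ (k:ℝ) := by exact_mod_cast hkpos
    have : 1/(k:ℝ) ≤ 1 := (div_le_one hk).mpr h1k
    linarith
  -- per-step recursion
  have step : ∀ i, f S - f (g (i+1)) ≤ (1 - 1/(k:ℝ)) * (f S - f (g i)) := by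
    intro i
    obtain ⟨v, hgv, hmax⟩ := hgreedy i
    have hgain0 : 0 ≤ f (insert v (g i)) - f (g i) := by
      have := hmono (g i) (insert v (g i)) (Finset.subset_insert v _)
      linarith
    have h1 : f S ≤ f (g i ∪ S) := hmono _ _ Finset.subset_union_right
    have h2 : f (g i ∪ S) ≤ f (g i) + ∑ u ∈ S, (f (insert u (g i)) - f (g i)) :=
      nwf_sum_bound f hsubmod S (g i)
    have h3 : ∑ u ∈ S, (f (insert u (g i)) - f (g i)) ≤
        S.card • (f (insert v (g i)) - f (g i)) :=
      Finset.sum_le_card_nsmul S _ _ (fun u _ => hmax u)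
    have h4 : (S.card : ℝ) * (f (insert v (g i)) - f (g i)) ≤
        (k:ℝ) * (f (insert v (g i)) - f (g i)) := by
      apply mul_le_mul_of_nonneg_right _ hgain0
      exact_mod_cast hS
    rw [nsmul_eq_mul] at h3
    have hk5 : f S - f (g i) ≤ (k:ℝ) * (f (g (i+1)) - f (g i)) := by
      rw [hgv]; linarith
    have hkne : (k:ℝ) ≠ 0 := ne_of_gt hk
    have hgain : (f S - f (g i)) / (k:ℝ) ≤ f (g (i+1)) - f (g i) := by
      rw [div_le_iff₀ hk]; linarith
    have heq : (1 - 1/(k:ℝ)) * (f S - f (g i)) =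
        (f S - f (g i)) - (f S - f (g i)) / (k:ℝ) := by
      field_simp
    rw [heq]; linarith
  -- iterate
  have iter : ∀ i, f S - f (g i) ≤ (1 - 1/(k:ℝ))^i * f S := by
    intro i
    induction i with
    | zero => simp [hg0, hempty]
    | succ i ih =>
      calc f S - f (g (i+1)) ≤ (1 - 1/(k:ℝ)) * (f S - f (g i)) := step i
        _ ≤ (1 - 1/(k:ℝ)) * ((1 - 1/(k:ℝ))^i * f S) :=
            mul_le_mul_of_nonneg_left ih hr0
        _ = (1 - 1/(k:ℝ))^(i+1) * f S := by ring
  -- (1 - 1/k)^k ≤ exp(-1)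
  have hpow : (1 - 1/(k:ℝ))^k ≤ Real.exp (-1) := by
    have h1 : (1 - 1/(k:ℝ)) ≤ Real.exp (-(1/(k:ℝ))) := by
      have := Real.add_one_le_exp (-(1/(k:ℝ)))
      linarith
    calc (1 - 1/(k:ℝ))^k ≤ (Real.exp (-(1/(k:ℝ))))^k :=
          pow_le_pow_left₀ hr0 h1 k
      _ = Real.exp ((k:ℝ) * (-(1/(k:ℝ)))) := by rw [← Real.exp_nat_mul]
      _ = Real.exp (-1) := by rw [mul_neg, mul_one_div, div_self (ne_of_gt hk)]
  have hfinal : f S - f (g k) ≤ Real.exp (-1) * f S := by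
    calc f S - f (g k) ≤ (1 - 1/(k:ℝ))^k * f S := iter k
      _ ≤ Real.exp (-1) * f S := mul_le_mul_of_nonneg_right hpow hfS
  rw [Real.exp_neg, inv_eq_one_div] at hfinal
  have hexp : (1 - 1/Real.exp 1) * f S = f S - (1/Real.exp 1) * f S := by ring
  linarith
end

section
/- Let f : 2^V → ℝ be monotone submodular with f(∅) = 0 on a finite set V, let g_0 = ∅ and g_{i+1} = g_i ∪ {v_i} with v_i a greedy maximizer of marginal gain. Then for every optimal set S with |S| = k and every i, f(S) − f(g_{i+1}) ≤ (1 − 1/k)(f(S) − f(g_i)). -/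
lemma submod_sum_bound {V : Type*} [DecidableEq V]
    (f : Finset V → ℝ)
    (hmono : ∀ A B : Finset V, A ⊆ B → f A ≤ f B)
    (hsubmod : ∀ (A B : Finset V) (v : V), A ⊆ B → v ∉ B →
      f (insert v B) - f B ≤ f (insert v A) - f A)
    (T A : Finset V) :
    f (T ∪ A) - f A ≤ ∑ v ∈ T, (f (insert v A) - f A) := by
  induction T using Finset.induction with
  | empty => simp
  | @insert a T ha ih =>
    rw [Finset.sum_insert ha, Finset.insert_union]
    by_cases haA : a ∈ A
    · have h1 : insert a (T ∪ A) = T ∪ A := by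
        rw [Finset.insert_eq_self]; exact Finset.mem_union_right _ haA
      have h2 : insert a A = A := Finset.insert_eq_self.2 haA
      rw [h1, h2]; linarith
    · have haTA : a ∉ T ∪ A := by
        simp [Finset.mem_union, ha, haA]
      have := hsubmod A (T ∪ A) a (Finset.subset_union_right) haTA
      linarith

/-- Per-step contraction of the greedy deficit: each greedy step closes at least
a `1/k` fraction of the gap to any optimal set of size `k`. -/
theorem stmt_3 {V : Type*} [Fintype V] [DecidableEq V] [Nonempty V]
    (f : Finset V → ℝ)
    (hmono : ∀ A B : Finset V, A ⊆ B → f A ≤ f B)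
    (hempty : f ∅ = 0)
    (hsubmod : ∀ (A B : Finset V) (v : V), A ⊆ B → v ∉ B →
      f (insert v B) - f B ≤ f (insert v A) - f A)
    (g : ℕ → Finset V)
    (hg0 : g 0 = ∅)
    (hgreedy : ∀ i : ℕ, ∃ v : V, g (i + 1) = insert v (g i) ∧
      ∀ u : V, f (insert u (g i)) - f (g i) ≤ f (insert v (g i)) - f (g i))
    (k : ℕ) (hk : 1 ≤ k)
    (S : Finset V) (hScard : S.card = k)
    (hSopt : ∀ T : Finset V, T.card ≤ k → f T ≤ f S)
    (i : ℕ) :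
    f S - f (g (i + 1)) ≤ (1 - 1 / (k : ℝ)) * (f S - f (g i)) := by
  obtain ⟨v, hv, hmax⟩ := hgreedy i
  set δ := f (g (i+1)) - f (g i) with hδ
  have hmarg : ∀ u : V, f (insert u (g i)) - f (g i) ≤ δ := by
    intro u; rw [hδ, hv]; exact hmax u
  -- f S - f (g i) ≤ k * δ
  have h1 : f S ≤ f (S ∪ g i) := hmono _ _ Finset.subset_union_left
  have h2 : f (S ∪ g i) - f (g i) ≤ ∑ v ∈ S, (f (insert v (g i)) - f (g i)) :=
    submod_sum_bound f hmono hsubmod S (g i)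
  have h3 : ∑ v ∈ S, (f (insert v (g i)) - f (g i)) ≤ (k : ℝ) * δ := by
    calc ∑ v ∈ S, (f (insert v (g i)) - f (g i)) ≤ ∑ _v ∈ S, δ :=
          Finset.sum_le_sum (fun u _ => hmarg u)
      _ = (k : ℝ) * δ := by rw [Finset.sum_const, hScard]; push_cast; ring
  have hkey : f S - f (g i) ≤ (k : ℝ) * δ := by linarith
  have hkpos : (0 : ℝ) < (k : ℝ) := by exact_mod_cast hk
  have : (1 / (k : ℝ)) * (f S - f (g i)) ≤ δ := by
    rw [div_mul_eq_mul_div, one_mul, div_le_iff₀ hkpos]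
    linarith [mul_comm δ (k : ℝ)]
  have : f S - f (g (i+1)) = (f S - f (g i)) - δ := by rw [hδ]; ring
  linarith
end

section
/- Let f : 2^V → ℝ be monotone submodular with f(∅) = 0 on a finite set V, and let g_i denote the greedy set of size i. Then for any S with |S| ≤ k: f(S) ≤ f(g_i) + k · (f(g_{i+1}) − f(g_i)) for every i ≥ 0. -/
lemma subadd_aux {V : Type*} [DecidableEq V]
    (f : Finset V → ℝ)
    (hsubmod : ∀ (A B : Finset V) (v : V), A ⊆ B → v ∉ B →
      f (insert v B) - f B ≤ f (insert v A) - f A)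
    (B : Finset V) :
    ∀ A : Finset V, f (A ∪ B) - f B ≤ ∑ v ∈ A \ B, (f (insert v B) - f B) := by
  intro A
  induction A using Finset.induction_on with
  | empty => simp
  | @insert a A ha ih =>
    by_cases hb : a ∈ B
    · have h1 : insert a A ∪ B = A ∪ B := by
        ext x; simp [Finset.mem_insert, Finset.mem_union]
        intro hx; subst hx; tauto
      have h2 : (insert a A) \ B = A \ B := Finset.insert_sdiff_of_mem A hb
      rw [h1, h2]; exact ih
    · have hna : a ∉ A ∪ B := by simp [ha, hb]
      have hsub : f (insert a (A ∪ B)) - f (A ∪ B) ≤ f (insert a B) - f B :=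
        hsubmod B (A ∪ B) a Finset.subset_union_right hna
      have h2 : (insert a A) \ B = insert a (A \ B) := by
        ext x; simp [Finset.mem_sdiff, Finset.mem_insert]
        constructor
        · rintro ⟨h1 | h1, h3⟩ <;> tauto
        · rintro (h1 | ⟨h1, h3⟩) <;> [subst h1; skip] <;> tauto
      rw [h2, Finset.sum_insert (by simp [ha]), Finset.insert_union]
      linarith
/-- The main greedy inequality: the optimum is bounded by the current greedy
value plus `k` times the next greedy gain. -/
theorem stmt_12 {V : Type*} [Fintype V] [DecidableEq V] [Nonempty V]
    (f : Finset V → ℝ)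
    (hmono : ∀ A B : Finset V, A ⊆ B → f A ≤ f B)
    (hempty : f ∅ = 0)
    (hsubmod : ∀ (A B : Finset V) (v : V), A ⊆ B → v ∉ B →
      f (insert v B) - f B ≤ f (insert v A) - f A)
    (g : ℕ → Finset V)
    (hg0 : g 0 = ∅)
    (hgreedy : ∀ i : ℕ, ∃ v : V, g (i + 1) = insert v (g i) ∧
      ∀ u : V, f (insert u (g i)) - f (g i) ≤ f (insert v (g i)) - f (g i))
    (k : ℕ) (S : Finset V) (hS : S.card ≤ k) (i : ℕ) :
    f S ≤ f (g i) + (k : ℝ) * (f (g (i + 1)) - f (g i)) := by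
  obtain ⟨v, hv, hmax⟩ := hgreedy i
  set M := f (g (i + 1)) - f (g i) with hM
  have hM0 : 0 ≤ M := by
    rw [hM, hv]
    have := hmono (g i) (insert v (g i)) (Finset.subset_insert _ _)
    linarith
  have hmax' : ∀ u : V, f (insert u (g i)) - f (g i) ≤ M := by
    intro u; rw [hM, hv]; exact hmax u
  have h1 : f S ≤ f (S ∪ g i) := hmono _ _ Finset.subset_union_left
  have h2 := subadd_aux f hsubmod (g i) S
  have h3 : ∑ u ∈ S \ g i, (f (insert u (g i)) - f (g i))
      ≤ ∑ _u ∈ S \ g i, M := Finset.sum_le_sum fun u _ => hmax' u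
  have h4 : ∑ _u ∈ S \ g i, M = ((S \ g i).card : ℝ) * M := by
    simp [mul_comm]
  have h5 : ((S \ g i).card : ℝ) ≤ (k : ℝ) := by
    have : (S \ g i).card ≤ S.card := Finset.card_le_card (Finset.sdiff_subset)
    exact_mod_cast this.trans hS
  have h6 : ((S \ g i).card : ℝ) * M ≤ (k : ℝ) * M :=
    mul_le_mul_of_nonneg_right h5 hM0
  linarith
end

section
/- For a monotone submodular normalized f on finite V and the greedy sets g_i of size i, define the deficit d_i = f(S) − f(g_i) for a fixed S with |S| ≤ k. Then the greedy step gain satisfies f(g_{i+1}) − f(g_i) ≥ d_i / k, and hence d_{i+1} ≤ d_i (1 − 1/k). -/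
private lemma telescope_sub {V : Type*} [DecidableEq V]
    (f : Finset V → ℝ)
    (hmono : ∀ A B : Finset V, A ⊆ B → f A ≤ f B)
    (hsubmod : ∀ (A B : Finset V) (v : V), A ⊆ B → v ∉ B →
      f (insert v B) - f B ≤ f (insert v A) - f A)
    (A T : Finset V) :
    f (A ∪ T) - f A ≤ ∑ v ∈ T, (f (insert v A) - f A) := by
  induction T using Finset.induction_on with
  | empty => simp
  | @insert w T hw ih =>
    rw [Finset.sum_insert hw]
    have h1 : A ∪ insert w T = insert w (A ∪ T) := by
      ext x; simp [or_comm, or_left_comm, or_assoc]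
    rw [h1]
    by_cases hwAT : w ∈ A ∪ T
    · have : insert w (A ∪ T) = A ∪ T := Finset.insert_eq_self.mpr hwAT
      rw [this]
      have h2 : (0:ℝ) ≤ f (insert w A) - f A :=
        sub_nonneg.mpr (hmono _ _ (Finset.subset_insert _ _))
      linarith
    · have h2 := hsubmod A (A ∪ T) w Finset.subset_union_left hwAT
      linarith

/-- Single-step deficit contraction for greedy submodular maximization: the
greedy gain is at least `(f S - f (g i)) / k`, hence the deficit contracts by a
factor `(1 - 1/k)`. -/
theorem stmt_15 {V : Type*} [Fintype V] [DecidableEq V] [Nonempty V]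
    (f : Finset V → ℝ)
    (hmono : ∀ A B : Finset V, A ⊆ B → f A ≤ f B)
    (hempty : f ∅ = 0)
    (hsubmod : ∀ (A B : Finset V) (v : V), A ⊆ B → v ∉ B →
      f (insert v B) - f B ≤ f (insert v A) - f A)
    (g : ℕ → Finset V)
    (hg0 : g 0 = ∅)
    (hgreedy : ∀ i : ℕ, ∃ v : V, g (i + 1) = insert v (g i) ∧
      ∀ u : V, f (insert u (g i)) - f (g i) ≤ f (insert v (g i)) - f (g i))
    (k : ℕ) (hk : 1 ≤ k) (S : Finset V) (hS : S.card ≤ k) (i : ℕ) :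
    (f S - f (g i)) / (k : ℝ) ≤ f (g (i + 1)) - f (g i) ∧
    f S - f (g (i + 1)) ≤ (f S - f (g i)) * (1 - 1 / (k : ℝ)) := by
  obtain ⟨v, hv, hmax⟩ := hgreedy i
  set A := g i
  set gain := f (g (i+1)) - f A with hgain
  have hgain_def : gain = f (insert v A) - f A := by rw [hgain, hv]
  have hgain_nonneg : (0:ℝ) ≤ gain := by
    rw [hgain_def]
    exact sub_nonneg.mpr (hmono _ _ (Finset.subset_insert _ _))
  have hkpos : (0:ℝ) < (k:ℝ) := by exact_mod_cast hk
  -- f S - f A ≤ k * gain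
  have hkey : f S - f A ≤ (k:ℝ) * gain := by
    have h1 : f S ≤ f (A ∪ S) := hmono _ _ Finset.subset_union_right
    have h2 := telescope_sub f hmono hsubmod A S
    have h3 : ∑ v ∈ S, (f (insert v A) - f A) ≤ ∑ _v ∈ S, gain := by
      apply Finset.sum_le_sum
      intro u _
      rw [hgain_def]; exact hmax u
    have h4 : ∑ _v ∈ S, gain = (S.card : ℝ) * gain := by
      rw [Finset.sum_const, nsmul_eq_mul]
    have h5 : (S.card : ℝ) * gain ≤ (k:ℝ) * gain := by
      apply mul_le_mul_of_nonneg_right _ hgain_nonneg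
      exact_mod_cast hS
    linarith
  have h6 : (f S - f A) / (k:ℝ) ≤ gain := by
    rw [div_le_iff₀ hkpos]; linarith [hkey]
  refine ⟨h6, ?_⟩
  have : f S - f (g (i+1)) = (f S - f A) - gain := by rw [hgain]; ring
  rw [this]
  have hexp : (f S - f A) * (1 - 1/(k:ℝ)) = (f S - f A) - (f S - f A)/(k:ℝ) := by
    field_simp
  rw [hexp]
  linarith
end
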